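/- Let α > 1 be a real number and m = ⌈α⌉. Define a_0 = 0, a_l = 1 + ((l-1)/(m-1))(α-1) for 1 ≤ l ≤ m, and a_{m+1} = α + 1, and let A = {a_0, ..., a_{m+1}} ⊂ R. Then for every positive integer n, every subset B ⊆ A^n with |B| > (m+1)^n contains three points u, v, w with ‖u-v‖_∞ = 1, ‖v-w‖_∞ = α, and ‖u-w‖_∞ = α + 1 (i.e., an isometric copy of the baton B(1,α) = {0, 1, 1+α} in the max metric). -/

import Mathlib

/-!
Induct on `n`, slicing `B ⊆ Aⁿ⁺¹` by the value `t ∈ A` of the last coordinate into sets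
`S t ⊆ Aⁿ`. A baton in one slice, or in `S 0 ∪ S 1`, lifts to a baton in `B` because the last
coordinates move by at most `1`, so these sets have at most `(|A| - 1)ⁿ` points. So does
`(S 0 ∩ S 1) ∪ S (α + 1)`: a point `p` of `S 0 ∩ S 1` within distance `α` of a point `q` of
`S (α + 1)` yields the baton `(p, 0), (p, 1), (q, α + 1)`, which also makes that union disjoint.
Hence `|S 0| + |S 1| + |S (α + 1)| ≤ 2 (|A| - 1)ⁿ`, and each of the other `|A| - 3` slices has
at most `(|A| - 1)ⁿ` points.
-/

open Finset Fintype

section Baton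

variable {E : Type*} [PseudoMetricSpace E]

/-- `u, v, w` is an isometric copy of the baton `{0, 1, 1 + α}`, in this order. -/
def IsBaton (α : ℝ) (u v w : E) : Prop :=
  dist u v = 1 ∧ dist v w = α ∧ dist u w = α + 1

def BatonFree (α : ℝ) (B : Finset E) : Prop :=
  ∀ u ∈ B, ∀ v ∈ B, ∀ w ∈ B, ¬IsBaton α u v w

theorem dist_snoc {n : ℕ} (p q : Fin n → E) (s t : E) :
    dist (Fin.snoc p s : Fin (n + 1) → E) (Fin.snoc q t) = max (dist p q) (dist s t) := by
  apply le_antisymm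
  · refine (dist_pi_le_iff (le_max_of_le_left dist_nonneg)).2 fun i => ?_
    induction i using Fin.lastCases with
    | last => simpa only [Fin.snoc_last] using le_max_right _ _
    | cast j =>
      simpa only [Fin.snoc_castSucc] using (dist_le_pi_dist p q j).trans (le_max_left _ _)
  · refine max_le ((dist_pi_le_iff dist_nonneg).2 fun j => ?_) ?_
    · simpa only [Fin.snoc_castSucc] using
        dist_le_pi_dist (Fin.snoc p s : Fin (n + 1) → E) (Fin.snoc q t) j.castSucc
    · simpa only [Fin.snoc_last] using
        dist_le_pi_dist (Fin.snoc p s : Fin (n + 1) → E) (Fin.snoc q t) (Fin.last n)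

theorem IsBaton.snoc {α : ℝ} {n : ℕ} {p q r : Fin n → E} {s t v : E} (h : IsBaton α p q r)
    (hst : dist s t ≤ 1) (htv : dist t v ≤ α) (hsv : dist s v ≤ α + 1) :
    IsBaton α (Fin.snoc p s : Fin (n + 1) → E) (Fin.snoc q t) (Fin.snoc r v) := by
  obtain ⟨h₁, h₂, h₃⟩ := h
  refine ⟨?_, ?_, ?_⟩
  · rw [dist_snoc, h₁, max_eq_left hst]
  · rw [dist_snoc, h₂, max_eq_left htv]
  · rw [dist_snoc, h₃, max_eq_left hsv]

end Baton

theorem isBaton_snoc_zero_one_snoc {α : ℝ} {n : ℕ} {p q : Fin n → ℝ} (hpq : dist p q ≤ α) :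
    IsBaton α (Fin.snoc p 0 : Fin (n + 1) → ℝ) (Fin.snoc p 1) (Fin.snoc q (α + 1)) := by
  have hα : 0 ≤ α := dist_nonneg.trans hpq
  refine ⟨?_, ?_, ?_⟩
  · rw [dist_snoc, dist_self, dist_zero_left, norm_one, max_eq_right zero_le_one]
  · rw [dist_snoc, Real.dist_eq, show (1 : ℝ) - (α + 1) = -α by ring, abs_neg, abs_of_nonneg hα,
      max_eq_right hpq]
  · rw [dist_snoc, dist_zero_left, Real.norm_of_nonneg (by linarith), max_eq_right (by linarith)]

section Slice

variable {E : Type*} [DecidableEq E] {n : ℕ}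

def lastSlice (B : Finset (Fin (n + 1) → E)) (t : E) : Finset (Fin n → E) :=
  {x ∈ B | x (Fin.last n) = t}.image Fin.init

variable {B : Finset (Fin (n + 1) → E)}

@[simp]
theorem mem_lastSlice {t : E} {y : Fin n → E} : y ∈ lastSlice B t ↔ Fin.snoc y t ∈ B := by
  simp only [lastSlice, mem_image, mem_filter]
  constructor
  · rintro ⟨x, ⟨hx, rfl⟩, rfl⟩
    rwa [Fin.snoc_init_self]
  · exact fun h => ⟨_, ⟨h, Fin.snoc_last _ _⟩, Fin.init_snoc _ _⟩

theorem card_lastSlice (t : E) : #(lastSlice B t) = #{x ∈ B | x (Fin.last n) = t} := by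
  refine card_image_of_injOn fun x hx y hy hxy => ?_
  simp only [coe_filter, Set.mem_ofPred_eq] at hx hy
  rw [← Fin.snoc_init_self x, ← Fin.snoc_init_self y, hxy, hx.2, hy.2]

theorem lastSlice_subset_piFinset {A : Finset E} (hBA : B ⊆ piFinset fun _ => A) (t : E) :
    lastSlice B t ⊆ piFinset fun _ => A := fun y hy =>
  mem_piFinset.2 fun i => by
    simpa only [Fin.snoc_castSucc] using mem_piFinset.1 (hBA (mem_lastSlice.1 hy)) i.castSucc

theorem card_eq_sum_card_lastSlice {A : Finset E} (hBA : B ⊆ piFinset fun _ => A) :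
    #B = ∑ t ∈ A, #(lastSlice B t) := by
  rw [card_eq_sum_card_fiberwise fun x hx => mem_piFinset.1 (hBA hx) (Fin.last n)]
  simp only [card_lastSlice]

end Slice

namespace BatonFree

variable {α : ℝ} {n : ℕ} {B : Finset (Fin (n + 1) → ℝ)}

theorem of_forall_exists_snoc_mem (hα : 1 ≤ α) (hB : BatonFree α B) {C : Finset (Fin n → ℝ)}
    {T : Set ℝ} (hT : ∀ s ∈ T, ∀ t ∈ T, dist s t ≤ 1) (hC : ∀ y ∈ C, ∃ t ∈ T, Fin.snoc y t ∈ B) :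
    BatonFree α C := by
  intro p hp q hq r hr hpqr
  obtain ⟨s, hs, hps⟩ := hC p hp
  obtain ⟨t, ht, hqt⟩ := hC q hq
  obtain ⟨v, hv, hrv⟩ := hC r hr
  exact hB _ hps _ hqt _ hrv <|
    hpqr.snoc (hT s hs t ht) ((hT t ht v hv).trans hα) ((hT s hs v hv).trans (by linarith))

theorem slice (hα : 1 ≤ α) (hB : BatonFree α B) (t : ℝ) : BatonFree α (lastSlice B t) :=
  hB.of_forall_exists_snoc_mem hα (T := {t}) (by simp) fun _ hy => ⟨t, rfl, mem_lastSlice.1 hy⟩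

theorem slice_zero_union_slice_one (hα : 1 ≤ α) (hB : BatonFree α B) :
    BatonFree α (lastSlice B 0 ∪ lastSlice B 1) := by
  refine hB.of_forall_exists_snoc_mem hα (T := Set.Icc 0 1)
    (fun s hs t ht => Real.dist_le_of_mem_Icc_01 hs ht) fun y hy => ?_
  rcases mem_union.1 hy with hy | hy
  · exact ⟨0, by simp, mem_lastSlice.1 hy⟩
  · exact ⟨1, by simp, mem_lastSlice.1 hy⟩

theorem disjoint_slice_inter_slice (hα : 0 ≤ α) (hB : BatonFree α B) :
    Disjoint (lastSlice B 0 ∩ lastSlice B 1) (lastSlice B (α + 1)) := by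
  refine disjoint_left.2 fun y hy hy' => ?_
  rw [mem_inter, mem_lastSlice, mem_lastSlice] at hy
  exact hB _ hy.1 _ hy.2 _ (mem_lastSlice.1 hy') <|
    isBaton_snoc_zero_one_snoc (by rwa [dist_self])

theorem slice_inter_slice_union_slice (hα : 1 ≤ α) (hB : BatonFree α B) :
    BatonFree α (lastSlice B 0 ∩ lastSlice B 1 ∪ lastSlice B (α + 1)) := by
  intro p hp q hq r hr hpqr
  simp only [mem_union, mem_inter, mem_lastSlice] at hp hq hr
  -- Lifting `p` and `q` to a common height `t`, only the last coordinate of `r` moves.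
  have lift : ∀ t, (t = 1 ∨ t = α + 1) → Fin.snoc p t ∈ B → Fin.snoc q t ∈ B → False := by
    intro t ht hpt hqt
    obtain ⟨v, hv, hrv⟩ : ∃ v, (v = 1 ∨ v = α + 1) ∧ Fin.snoc r v ∈ B :=
      hr.elim (fun h => ⟨1, .inl rfl, h.2⟩) fun h => ⟨α + 1, .inr rfl, h⟩
    have htv : dist t v ≤ α := by
      have hα₀ : (0 : ℝ) ≤ α := by linarith
      rcases ht with rfl | rfl <;> rcases hv with rfl | rfl <;>
        simp [abs_of_nonneg hα₀, hα₀]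
    exact hB _ hpt _ hqt _ hrv <| hpqr.snoc (by simp) htv (by linarith)
  rcases hp with ⟨hp₀, hp₁⟩ | hp <;> rcases hq with ⟨hq₀, hq₁⟩ | hq
  · exact lift 1 (.inl rfl) hp₁ hq₁
  · exact hB _ hp₀ _ hp₁ _ hq (isBaton_snoc_zero_one_snoc (hpqr.1.le.trans hα))
  · exact hB _ hq₀ _ hq₁ _ hp (isBaton_snoc_zero_one_snoc (dist_comm p q ▸ hpqr.1.le.trans hα))
  · exact lift (α + 1) (.inr rfl) hp hq

theorem card_le_pow (hα : 1 ≤ α) {A : Finset ℝ} (h₀ : 0 ∈ A) (h₁ : 1 ∈ A) (hα₁ : α + 1 ∈ A) :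
    ∀ {n : ℕ} {B : Finset (Fin n → ℝ)}, (B ⊆ piFinset fun _ => A) → BatonFree α B →
      #B ≤ (#A - 1) ^ n := by
  intro n
  induction n with
  | zero => intro B _ _; simpa using card_le_one_of_subsingleton B
  | succ n ih =>
    intro B hBA hB
    set K := (#A - 1) ^ n
    have hT : ({0, 1, α + 1} : Finset ℝ) ⊆ A := by simp [insert_subset_iff, h₀, h₁, hα₁]
    have hT₃ : #({0, 1, α + 1} : Finset ℝ) = 3 :=
      card_eq_three.2 ⟨0, 1, α + 1, one_ne_zero.symm, by linarith, by linarith, rfl⟩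
    set S := lastSlice B
    have hrest : ∑ t ∈ A \ {0, 1, α + 1}, #(S t) ≤ (#A - 3) * K := by
      rw [← hT₃, ← card_sdiff_of_subset hT, ← smul_eq_mul]
      exact sum_le_card_nsmul _ _ _ fun t _ =>
        ih (lastSlice_subset_piFinset hBA t) (hB.slice hα t)
    have hthree : #(S 0) + #(S 1) + #(S (α + 1)) ≤ 2 * K := by
      have hsub := lastSlice_subset_piFinset hBA
      calc #(S 0) + #(S 1) + #(S (α + 1)) = #(S 0 ∪ S 1) + #(S 0 ∩ S 1 ∪ S (α + 1)) := by
            rw [card_union_of_disjoint (hB.disjoint_slice_inter_slice (by linarith)),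
              ← card_union_add_card_inter]
            ring
        _ ≤ K + K := add_le_add
            (ih (union_subset (hsub 0) (hsub 1)) (hB.slice_zero_union_slice_one hα))
            (ih (union_subset (inter_subset_left.trans (hsub 0)) (hsub _))
              (hB.slice_inter_slice_union_slice hα))
        _ = 2 * K := (two_mul K).symm
    have hA₃ : 3 ≤ #A := hT₃ ▸ card_le_card hT
    have hα₀ : (0 : ℝ) ≠ α + 1 := by linarith
    calc #B = ∑ t ∈ A \ {0, 1, α + 1}, #(S t) + ∑ t ∈ {0, 1, α + 1}, #(S t) := by
          rw [sum_sdiff hT, card_eq_sum_card_lastSlice hBA]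
      _ = ∑ t ∈ A \ {0, 1, α + 1}, #(S t) + (#(S 0) + #(S 1) + #(S (α + 1))) := by
          rw [sum_insert (by simp [hα₀]), sum_pair (by linarith), add_assoc]
      _ ≤ (#A - 3) * K + 2 * K := add_le_add hrest hthree
      _ = (#A - 1) ^ (n + 1) := by
          rw [pow_succ, ← add_mul, mul_comm]
          congr 2
          omega

end BatonFree

theorem stmt_5_general (α : ℝ) (hα : 1 < α) (m : ℕ) (hm : m = ⌈α⌉₊)
    (a : ℕ → ℝ)
    (ha0 : a 0 = 0)
    (ha : ∀ l : ℕ, 1 ≤ l → l ≤ m → a l = 1 + (((l : ℝ) - 1) / ((m : ℝ) - 1)) * (α - 1))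
    (ham1 : a (m + 1) = α + 1)
    (n : ℕ)
    (B : Finset (Fin n → ℝ))
    (hB : ∀ x ∈ B, ∀ i : Fin n, ∃ l : ℕ, l ≤ m + 1 ∧ x i = a l)
    (hcard : B.card > (m + 1) ^ n) :
    ∃ u ∈ B, ∃ v ∈ B, ∃ w ∈ B,
      dist u v = 1 ∧ dist v w = α ∧ dist u w = α + 1 := by
  have hm₁ : 1 ≤ m := hm ▸ Nat.one_le_ceil_iff.2 (by linarith)
  have ha₁ : a 1 = 1 := by simp [ha 1 le_rfl hm₁]
  set A := (range (m + 2)).image a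
  have hmemA : ∀ l ≤ m + 1, a l ∈ A := fun l hl => mem_image_of_mem a (mem_range.2 (by omega))
  have hBA : B ⊆ piFinset fun _ => A := fun x hx => mem_piFinset.2 fun i => by
    obtain ⟨l, hl, hxl⟩ := hB x hx i
    exact hxl ▸ hmemA l hl
  by_contra hfree
  have hfree' : BatonFree α B := fun u hu v hv w hw huvw => hfree ⟨u, hu, v, hv, w, hw, huvw⟩
  have hA : #A ≤ m + 2 := card_image_le.trans_eq (card_range _)
  have hbound := BatonFree.card_le_pow hα.le (ha0 ▸ hmemA 0 (by omega))
    (ha₁ ▸ hmemA 1 (by omega)) (ham1 ▸ hmemA (m + 1) le_rfl) hBA hfree'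
  exact (hbound.trans (Nat.pow_le_pow_left (by omega) n)).not_gt hcard

/-- Theorem on `B(1,α)`: with `m = ⌈α⌉` and the explicit set
`A = {a_0, …, a_{m+1}}`, every `B ⊆ A^n` with `|B| > (m+1)^n` contains an
isometric copy of the baton `{0, 1, 1+α}` in the Chebyshev metric. -/
theorem stmt_5 (α : ℝ) (hα : 1 < α) (m : ℕ) (hm : m = ⌈α⌉₊)
    (a : ℕ → ℝ)
    (ha0 : a 0 = 0)
    (ha : ∀ l : ℕ, 1 ≤ l → l ≤ m → a l = 1 + (((l : ℝ) - 1) / ((m : ℝ) - 1)) * (α - 1))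
    (ham1 : a (m + 1) = α + 1)
    (n : ℕ) (hn : 0 < n)
    (B : Finset (Fin n → ℝ))
    (hB : ∀ x ∈ B, ∀ i : Fin n, ∃ l : ℕ, l ≤ m + 1 ∧ x i = a l)
    (hcard : B.card > (m + 1) ^ n) :
    ∃ u ∈ B, ∃ v ∈ B, ∃ w ∈ B,
      dist u v = 1 ∧ dist v w = α ∧ dist u w = α + 1 :=
  stmt_5_general α hα m hm a ha0 ha ham1 n B hB hcard
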